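/- For all real α, β > −1 and all fixed i, k ∈ ℕ with i ≤ k, lim_{n→∞} (P_{n−i}^{(α+2i,β)})^{(k−i)}(1) / (P_n^{(α,β)})^{(k)}(1) = 2^i·Γ(α+k+1)/Γ(α+i+k+1). -/

import Mathlib

open Polynomial Filter

/-- The Jacobi polynomial `P_n^{(α,β)}` as a real polynomial. -/
noncomputable def jacobiP (α β : ℝ) (n : ℕ) : Polynomial ℝ :=
  ∑ k ∈ Finset.range (n + 1),
    Polynomial.C (Real.Gamma (n + α + 1) / (Real.Gamma ((n : ℝ) - k + 1) * Real.Gamma (α + k + 1)) *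
        (Real.Gamma (n + β + 1) / (Real.Gamma ((k : ℝ) + 1) * Real.Gamma ((n : ℝ) - k + β + 1)))) *
      (Polynomial.C (2⁻¹ : ℝ) * (Polynomial.X - 1)) ^ k *
      (Polynomial.C (2⁻¹ : ℝ) * (Polynomial.X + 1)) ^ (n - k)

/-- The squared Jacobi norm `‖P_n^{(α,β)}‖²`. -/
noncomputable def jacobiNormSq (α β : ℝ) (n : ℕ) : ℝ :=
  ∫ x in (-1 : ℝ)..1, (jacobiP α β n).eval x ^ 2 * (1 - x) ^ α * (1 + x) ^ β

/-- The kernel `K_n^{(j,k)}(x,y)`. -/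
noncomputable def kernK (α β : ℝ) (j k n : ℕ) (x y : ℝ) : ℝ :=
  ∑ i ∈ Finset.range (n + 1),
    (Polynomial.derivative^[j] (jacobiP α β i)).eval x *
      (Polynomial.derivative^[k] (jacobiP α β i)).eval y / jacobiNormSq α β i

/-- The kernel `K_n^{(j,0)}(1,·)` as a polynomial. -/
noncomputable def kernKPoly (α β : ℝ) (j n : ℕ) : Polynomial ℝ :=
  ∑ i ∈ Finset.range (n + 1),
    Polynomial.C ((Polynomial.derivative^[j] (jacobiP α β i)).eval 1 / jacobiNormSq α β i) *
      jacobiP α β i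

/-- The varying Sobolev inner product `(f,g)_{S,n}` with mass `m`. -/
noncomputable def sobInner (α β : ℝ) (j : ℕ) (m : ℝ) (f g : Polynomial ℝ) : ℝ :=
  (∫ x in (-1 : ℝ)..1, f.eval x * g.eval x * (1 - x) ^ α * (1 + x) ^ β) +
    m * (Polynomial.derivative^[j] f).eval 1 * (Polynomial.derivative^[j] g).eval 1

/-- The Jacobi–Sobolev orthogonal polynomial `Q_n`. -/
noncomputable def sobQ (α β : ℝ) (j : ℕ) (Ms : ℕ → ℝ) (n : ℕ) : Polynomial ℝ :=
  jacobiP α β n -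
    Polynomial.C (Ms n * (Polynomial.derivative^[j] (jacobiP α β n)).eval 1 /
        (1 + Ms n * kernK α β j j (n - 1) 1 1)) *
      kernKPoly α β j (n - 1)

/-! Differentiating the defining sum `k` times at `x = 1` kills every term containing
`(x - 1)^m` with `m > k`, which leaves `P_n^{(α,β)(k)}(1) = Γ(n+α+1) / (2^k (n-k)!) · f_k(n)`,
where `f_k(x) = ∑_{m ≤ k} C(k,m) / Γ(α+m+1) · (x+β)(x+β-1)⋯(x+β-m+1)`
(`jacobiDerivAtOnePoly`) is a polynomial of degree `k` with leading coefficient `1/Γ(α+k+1)`.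
In the ratio the factorials cancel, `Γ(n+α+i+1)/Γ(n+α+1)` is the rising factorial
`(n+α+1)⋯(n+α+i)`, and what remains is `2^i` times a quotient of two polynomials in `n` of
degree `k` with leading coefficients `1/Γ(α+i+k+1)` and `1/Γ(α+k+1)`. -/

open Finset
open scoped Nat

theorem Polynomial.iterate_derivative_X_sub_C_pow_mul_eval {R : Type*} [CommRing R] (a : R)
    (m k : ℕ) (q : R[X]) :
    (derivative^[k] ((X - C a) ^ m * q)).eval a =
      k.descFactorial m * (derivative^[k - m] q).eval a := by
  rw [iterate_derivative_mul, eval_finsetSum]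
  simp only [iterate_derivative_X_sub_pow, nsmul_eq_mul, eval_mul, eval_natCast, eval_pow,
    eval_sub, eval_X, eval_C, sub_self]
  rcases le_or_gt m k with hmk | hkm
  · rw [sum_eq_single (k - m)]
    · rw [Nat.sub_sub_self hmk, Nat.sub_self, pow_zero, Nat.descFactorial_self,
        Nat.choose_symm hmk, Nat.descFactorial_eq_factorial_mul_choose]
      push_cast; ring
    · intro j hj hjm
      have := mem_range.1 hj
      rcases lt_or_gt_of_ne (show k - j ≠ m by omega) with h | h
      · rw [zero_pow (by omega)]; ring
      · rw [Nat.descFactorial_eq_zero_iff_lt.2 h]; simp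
    · intro h; exact absurd (mem_range.2 (by omega)) h
  · rw [Nat.descFactorial_eq_zero_iff_lt.2 hkm, Nat.cast_zero, zero_mul]
    refine sum_eq_zero fun j hj => ?_
    have := mem_range.1 hj
    rw [zero_pow (by omega)]; ring

theorem Real.Gamma_add_nat_eq_ascPochhammer_eval_mul {x : ℝ} (hx : 0 < x) (m : ℕ) :
    Real.Gamma (x + m) = (ascPochhammer ℝ m).eval x * Real.Gamma x := by
  induction m with
  | zero => simp
  | succ m ih =>
    rw [Nat.cast_succ, ← add_assoc, Real.Gamma_add_one (by positivity), ih,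
      ascPochhammer_succ_eval]
    ring

theorem Real.Gamma_add_one_eq_descPochhammer_eval_mul {x : ℝ} (m : ℕ) (hx : (m : ℝ) - 1 < x) :
    Real.Gamma (x + 1) = (descPochhammer ℝ m).eval x * Real.Gamma (x - m + 1) := by
  rw [descPochhammer_eval_eq_ascPochhammer,
    ← Real.Gamma_add_nat_eq_ascPochhammer_eval_mul (by linarith)]
  ring_nf

theorem Real.Gamma_add_natCast_add_one_pos {x : ℝ} (hx : -1 < x) (j : ℕ) :
    0 < Real.Gamma (x + j + 1) :=
  Real.Gamma_pos_of_pos (by linarith [j.cast_nonneg' (α := ℝ)])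

noncomputable def jacobiDerivAtOnePoly (α β : ℝ) (k : ℕ) : ℝ[X] :=
  ∑ m ∈ range (k + 1),
    C ((k.choose m : ℝ) / Real.Gamma (α + m + 1)) * taylor β (descPochhammer ℝ m)

theorem natDegree_jacobiDerivAtOnePoly_le (α β : ℝ) (k : ℕ) :
    (jacobiDerivAtOnePoly α β k).natDegree ≤ k := by
  refine natDegree_sum_le_of_forall_le _ _ fun m hm => (natDegree_C_mul_le _ _).trans ?_
  rw [natDegree_taylor, descPochhammer_natDegree]
  exact Nat.lt_succ_iff.1 (mem_range.1 hm)

theorem coeff_jacobiDerivAtOnePoly_self (α β : ℝ) (k : ℕ) :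
    (jacobiDerivAtOnePoly α β k).coeff k = (Real.Gamma (α + k + 1))⁻¹ := by
  rw [jacobiDerivAtOnePoly, finsetSum_coeff, sum_eq_single_of_mem k (self_mem_range_succ k)]
  · have hmonic : (taylor β (descPochhammer ℝ k)).coeff k = 1 := by
      have h := leadingCoeff_taylor (r := β) (f := descPochhammer ℝ k)
      rwa [(monic_descPochhammer ℝ k).leadingCoeff, leadingCoeff, natDegree_taylor,
        descPochhammer_natDegree] at h
    rw [coeff_C_mul, hmonic, Nat.choose_self]
    simp
  · intro m hm hmk
    rw [coeff_C_mul, coeff_eq_zero_of_natDegree_lt, mul_zero]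
    rw [natDegree_taylor, descPochhammer_natDegree]
    have := mem_range.1 hm
    omega

theorem natDegree_jacobiDerivAtOnePoly {α : ℝ} (hα : -1 < α) (β : ℝ) (k : ℕ) :
    (jacobiDerivAtOnePoly α β k).natDegree = k := by
  refine natDegree_eq_of_le_of_coeff_ne_zero (natDegree_jacobiDerivAtOnePoly_le α β k) ?_
  rw [coeff_jacobiDerivAtOnePoly_self]
  exact inv_ne_zero (Real.Gamma_add_natCast_add_one_pos hα k).ne'

theorem leadingCoeff_jacobiDerivAtOnePoly {α : ℝ} (hα : -1 < α) (β : ℝ) (k : ℕ) :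
    (jacobiDerivAtOnePoly α β k).leadingCoeff = (Real.Gamma (α + k + 1))⁻¹ := by
  rw [leadingCoeff, natDegree_jacobiDerivAtOnePoly hα, coeff_jacobiDerivAtOnePoly_self]

theorem degree_jacobiDerivAtOnePoly {α : ℝ} (hα : -1 < α) (β : ℝ) (k : ℕ) :
    (jacobiDerivAtOnePoly α β k).degree = k := by
  have hne : (jacobiDerivAtOnePoly α β k).leadingCoeff ≠ 0 := by
    rw [leadingCoeff_jacobiDerivAtOnePoly hα]
    exact inv_ne_zero (Real.Gamma_add_natCast_add_one_pos hα k).ne'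
  rw [degree_eq_natDegree (leadingCoeff_ne_zero.1 hne), natDegree_jacobiDerivAtOnePoly hα]

theorem iterate_derivative_jacobiP_summand_eval_one (c : ℝ) {m n : ℕ} (hmn : m ≤ n)
    (k : ℕ) :
    (derivative^[k]
        (C c * (C (2⁻¹ : ℝ) * (X - 1)) ^ m * (C (2⁻¹ : ℝ) * (X + 1)) ^ (n - m))).eval 1 =
      c * 2⁻¹ ^ n * k.descFactorial m * (n - m).descFactorial (k - m) *
        2 ^ (n - m - (k - m)) := by
  have hsplit : C c * (C (2⁻¹ : ℝ) * (X - 1)) ^ m * (C (2⁻¹ : ℝ) * (X + 1)) ^ (n - m) =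
      C (c * 2⁻¹ ^ n) * ((X - C 1) ^ m * (X + C 1) ^ (n - m)) := by
    rw [← Nat.add_sub_of_le hmn, Nat.add_sub_cancel_left, pow_add]
    simp only [mul_pow, ← C_pow, C_1, map_mul]
    ring
  rw [hsplit, iterate_derivative_C_mul, eval_mul, eval_C,
    iterate_derivative_X_sub_C_pow_mul_eval, iterate_derivative_X_add_pow]
  simp only [nsmul_eq_mul, eval_mul, eval_natCast, eval_pow, eval_add, eval_X, eval_C]
  norm_num
  ring

theorem iterate_derivative_jacobiP_eval_one (α : ℝ) {β : ℝ} (hβ : -1 < β) {k n : ℕ}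
    (hkn : k ≤ n) :
    (derivative^[k] (jacobiP α β n)).eval 1 =
      Real.Gamma (n + α + 1) / (2 ^ k * (n - k)!) *
        (jacobiDerivAtOnePoly α β k).eval (n : ℝ) := by
  rw [jacobiP, iterate_derivative_sum, eval_finsetSum, jacobiDerivAtOnePoly, eval_finsetSum,
    mul_sum, ← sum_subset (range_subset_range.2 (Nat.succ_le_succ hkn))]
  · refine sum_congr rfl fun m hm => ?_
    have hmk : m ≤ k := Nat.lt_succ_iff.1 (mem_range.1 hm)
    have hmn : m ≤ n := hmk.trans hkn
    have hnm : (m : ℝ) ≤ n := by exact_mod_cast hmn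
    have hfac_sub : Real.Gamma ((n : ℝ) - m + 1) = (n - m)! := by
      rw [← Nat.cast_sub hmn, Real.Gamma_nat_eq_factorial]
    have hdesc : (n - m).descFactorial (k - m) * ((n - k)! : ℝ) = (n - m)! := by
      rw [mul_comm]
      exact_mod_cast (show n - m - (k - m) = n - k by omega) ▸
        Nat.factorial_mul_descFactorial (show k - m ≤ n - m by omega)
    have hΓβ : Real.Gamma (n + β + 1) =
        (descPochhammer ℝ m).eval (n + β) * Real.Gamma (n - m + β + 1) := by
      rw [Real.Gamma_add_one_eq_descPochhammer_eval_mul m (by linarith)]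
      ring_nf
    have hpow : (2⁻¹ : ℝ) ^ n = (2 ^ k * 2 ^ (n - m - (k - m)))⁻¹ := by
      rw [← pow_add, inv_pow]
      congr 2
      omega
    have hD : ((n - m).descFactorial (k - m) : ℝ) ≠ 0 := fun h => by
      simp only [h, zero_mul] at hdesc
      exact (n - m).factorial_ne_zero (by exact_mod_cast hdesc.symm)
    have hΓpos : 0 < Real.Gamma (n - m + β + 1) := Real.Gamma_pos_of_pos (by linarith)
    rw [iterate_derivative_jacobiP_summand_eval_one _ hmn, eval_mul, eval_C, taylor_eval,
      hfac_sub, Real.Gamma_nat_eq_factorial, hΓβ, Nat.descFactorial_eq_factorial_mul_choose,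
      ← hdesc]
    push_cast
    rw [hpow]
    field_simp
  · intro m _ hm
    rw [iterate_derivative_jacobiP_summand_eval_one _ (Nat.lt_succ_iff.1 (mem_range.1 ‹_›)),
      Nat.descFactorial_eq_zero_iff_lt.2 (by simpa using hm)]
    simp

theorem iterate_derivative_jacobiP_shift_eval_one {α : ℝ} (hα : -1 < α) {β : ℝ}
    (hβ : -1 < β) {i k n : ℕ} (hik : i ≤ k) (hkn : k ≤ n) :
    (derivative^[k - i] (jacobiP (α + 2 * i) β (n - i))).eval 1 =
      Real.Gamma (n + α + 1) / (2 ^ (k - i) * (n - k)!) *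
        ((ascPochhammer ℝ i).eval (n + α + 1) *
          (jacobiDerivAtOnePoly (α + 2 * i) β (k - i)).eval (n - i : ℝ)) := by
  have hΓ : Real.Gamma ((n - i : ℕ) + (α + 2 * i) + 1) =
      (ascPochhammer ℝ i).eval (n + α + 1) * Real.Gamma (n + α + 1) := by
    rw [← Real.Gamma_add_nat_eq_ascPochhammer_eval_mul
      (by linarith [n.cast_nonneg' (α := ℝ)]), Nat.cast_sub (hik.trans hkn)]
    ring_nf
  rw [iterate_derivative_jacobiP_eval_one _ hβ (Nat.sub_le_sub_right hkn i), hΓ,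
    Nat.sub_sub_sub_cancel_right hik, Nat.cast_sub (hik.trans hkn)]
  ring

theorem tendsto_ascPochhammer_mul_jacobiDerivAtOnePoly_div {α : ℝ} (hα : -1 < α) (β : ℝ)
    {i k : ℕ} (hik : i ≤ k) :
    Tendsto (fun x : ℝ => (ascPochhammer ℝ i).eval (x + α + 1) *
        (jacobiDerivAtOnePoly (α + 2 * i) β (k - i)).eval (x - i) /
        (jacobiDerivAtOnePoly α β k).eval x) atTop
      (nhds (Real.Gamma (α + k + 1) / Real.Gamma (α + i + k + 1))) := by
  have hα' : -1 < α + 2 * i := by linarith [i.cast_nonneg' (α := ℝ)]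
  set P := taylor (α + 1) (ascPochhammer ℝ i) *
    taylor (-(i : ℝ)) (jacobiDerivAtOnePoly (α + 2 * i) β (k - i))
  have hP_eval (x : ℝ) : P.eval x = (ascPochhammer ℝ i).eval (x + α + 1) *
      (jacobiDerivAtOnePoly (α + 2 * i) β (k - i)).eval (x - i) := by
    rw [eval_mul, taylor_eval, taylor_eval, add_assoc, sub_eq_add_neg]
  have hP_leadingCoeff : P.leadingCoeff = (Real.Gamma (α + i + k + 1))⁻¹ := by
    rw [leadingCoeff_mul, leadingCoeff_taylor, leadingCoeff_taylor,
      (monic_ascPochhammer ℝ i).leadingCoeff, leadingCoeff_jacobiDerivAtOnePoly hα',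
      Nat.cast_sub hik, one_mul]
    ring_nf
  have hP : P.leadingCoeff ≠ 0 := hP_leadingCoeff ▸
    inv_ne_zero (Real.Gamma_add_natCast_add_one_pos
      (by linarith [i.cast_nonneg' (α := ℝ)]) k).ne'
  have hdeg : P.degree = (jacobiDerivAtOnePoly α β k).degree := by
    rw [degree_eq_natDegree (leadingCoeff_ne_zero.1 hP), degree_jacobiDerivAtOnePoly hα,
      natDegree_mul' (by rwa [← leadingCoeff_mul]), natDegree_taylor, natDegree_taylor,
      ascPochhammer_natDegree, natDegree_jacobiDerivAtOnePoly hα', Nat.add_sub_cancel' hik]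
  have hlim := div_tendsto_atTop_leadingCoeff_div_of_degree_eq P _ hdeg
  simp only [hP_eval, hP_leadingCoeff, leadingCoeff_jacobiDerivAtOnePoly hα, inv_div_inv] at hlim
  exact hlim

/-- limit of `(P_{n-i}^{(α+2i,β)})^{(k-i)}(1)/(P_n^{(α,β)})^{(k)}(1)`. -/
theorem jacobiP_deriv_ratio (α β : ℝ) (hα : -1 < α) (hβ : -1 < β) (i k : ℕ) (hik : i ≤ k) :
    Filter.Tendsto
      (fun n : ℕ => (Polynomial.derivative^[k - i] (jacobiP (α + 2 * i) β (n - i))).eval 1 /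
        (Polynomial.derivative^[k] (jacobiP α β n)).eval 1)
      Filter.atTop
      (nhds ((2 : ℝ) ^ i * Real.Gamma (α + k + 1) / Real.Gamma (α + i + k + 1))) := by
  have hlim := ((tendsto_ascPochhammer_mul_jacobiDerivAtOnePoly_div hα β hik).comp
    tendsto_natCast_atTop_atTop).const_mul ((2 : ℝ) ^ i)
  rw [← mul_div_assoc] at hlim
  refine hlim.congr' ?_
  filter_upwards [eventually_ge_atTop k] with n hkn
  have hΓ : 0 < Real.Gamma (n + α + 1) :=
    Real.Gamma_pos_of_pos (by linarith [n.cast_nonneg' (α := ℝ)])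
  have hpow : (2 : ℝ) ^ k = 2 ^ i * 2 ^ (k - i) := by rw [← pow_add, Nat.add_sub_cancel' hik]
  rw [iterate_derivative_jacobiP_shift_eval_one hα hβ hik hkn,
    iterate_derivative_jacobiP_eval_one α hβ hkn, hpow, Function.comp_apply]
  rcases eq_or_ne ((jacobiDerivAtOnePoly α β k).eval (n : ℝ)) 0 with hQn | hQn
  · simp [hQn]
  · field_simp
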